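/- Let H be a complex Hilbert space and let ∘ : E(H) × E(H) → E(H) satisfy the duality condition: A∘ρ is trace-class and Tr((A∘ρ)B) = Tr(ρ(A∘B)) for all ρ ∈ D(H) and A,B ∈ E(H). Then for all A,B,C ∈ E(H) with B ≤ C, one has A∘B ≤ A∘C. -/

import Mathlib

/-!
Common setup: effects, density operators, trace, square roots and the strong
operator topology on a complex Hilbert space `H`, together with the five
conditions (duality, unit, weak associativity, continuity, purity) defining a
sequential product on the set `E(H)` of quantum effects.
-/

set_option maxHeartbeats 1000000
set_option synthInstance.maxHeartbeats 1000000

open scoped InnerProductSpace ComplexOrder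
open Filter

noncomputable section

variable (H : Type*) [NormedAddCommGroup H] [InnerProductSpace ℂ H] [CompleteSpace H]

/-- The index set of a fixed Hilbert basis of `H`. -/
def stdIdx : Set H := (exists_hilbertBasis ℂ H).choose

/-- A fixed Hilbert basis of `H`. -/
def stdBasis : HilbertBasis (stdIdx H) ℂ H := (exists_hilbertBasis ℂ H).choose_spec.choose

variable {H}

/-- The positive square root `A^{1/2}` of a (positive) operator `A`. -/
def sqrtOp (A : H →L[ℂ] H) : H →L[ℂ] H := CFC.sqrt A

/-- The trace of an operator, computed in the fixed Hilbert basis. -/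
def traceOp (T : H →L[ℂ] H) : ℂ := ∑' i, ⟪(stdBasis H i : H), T (stdBasis H i)⟫_ℂ

/-- `T` is trace-class: `|T| = (T*T)^{1/2}` has finite trace. -/
def IsTraceClass (T : H →L[ℂ] H) : Prop :=
  Summable fun i => ⟪(stdBasis H i : H), sqrtOp (star T * T) (stdBasis H i)⟫_ℂ

/-- A quantum effect: an operator `A` with `0 ≤ A ≤ 1` in the Loewner order (in
particular `A` is bounded and self-adjoint).  `E(H)` is the set of effects. -/
def IsEffect (A : H →L[ℂ] H) : Prop := 0 ≤ A ∧ A ≤ 1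

/-- A density operator: a positive trace-class operator of unit trace.
`D(H)` is the set of density operators. -/
def IsDensity (ρ : H →L[ℂ] H) : Prop := 0 ≤ ρ ∧ IsTraceClass ρ ∧ traceOp ρ = 1

variable (H) in
/-- The strong operator topology on bounded operators: the topology of pointwise
convergence (as maps into `H` with its norm topology). -/
def sot : TopologicalSpace (H →L[ℂ] H) :=
  TopologicalSpace.induced (fun T => (T : H → H)) inferInstance

/-- `p` is a rank-one orthogonal projection. -/
def IsRankOneProjection (p : H →L[ℂ] H) : Prop :=
  IsIdempotentElem p ∧ IsSelfAdjoint p ∧ LinearMap.rank (p : H →ₗ[ℂ] H) = 1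

/-- `P_ψ`: the rank-one orthogonal projection onto the span of a unit vector `ψ`,
`x ↦ ⟪ψ, x⟫ • ψ`. -/
def projVec (ψ : H) : H →L[ℂ] H := (innerSL ℂ ψ).smulRight ψ

/-- `op` is a binary operation on `E(H)`: it maps pairs of effects to effects. -/
def EffectClosed (op : (H →L[ℂ] H) → (H →L[ℂ] H) → (H →L[ℂ] H)) : Prop :=
  ∀ A B, IsEffect A → IsEffect B → IsEffect (op A B)

/-- Condition 1 (Duality): for all effects `A, B` and densities `ρ`, the operator
`A ∘ ρ` is trace-class and `Tr((A∘ρ)B) = Tr(ρ(A∘B))`. -/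
def DualityCond (op : (H →L[ℂ] H) → (H →L[ℂ] H) → (H →L[ℂ] H)) : Prop :=
  ∀ A B ρ : H →L[ℂ] H, IsEffect A → IsEffect B → IsDensity ρ →
    IsTraceClass (op A ρ) ∧ traceOp (op A ρ * B) = traceOp (ρ * op A B)

/-- Condition 2 (Unit): `A ∘ I = I ∘ A = A` for every effect `A`. -/
def UnitCond (op : (H →L[ℂ] H) → (H →L[ℂ] H) → (H →L[ℂ] H)) : Prop :=
  ∀ A : H →L[ℂ] H, IsEffect A → op A 1 = A ∧ op 1 A = A

/-- Condition 3 (Weak associativity): `A² ∘ B = A ∘ (A ∘ B)` for all effects `A, B`. -/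
def WeakAssocCond (op : (H →L[ℂ] H) → (H →L[ℂ] H) → (H →L[ℂ] H)) : Prop :=
  ∀ A B : H →L[ℂ] H, IsEffect A → IsEffect B → op (A * A) B = op A (op A B)

/-- Condition 4 (Continuity): for each fixed effect `B`, the map `A ↦ A ∘ B` is
continuous on `E(H)` for the strong operator topology. -/
def ContinuityCond (op : (H →L[ℂ] H) → (H →L[ℂ] H) → (H →L[ℂ] H)) : Prop :=
  ∀ B : H →L[ℂ] H, IsEffect B →
    @ContinuousOn _ _ (sot H) (sot H) (fun A => op A B) {A | IsEffect A}

/-- Condition 5 (Purity): for every effect `A` and every rank-one orthogonal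
projection `p`, the operator `A ∘ p` has rank at most `1`. -/
def PurityCond (op : (H →L[ℂ] H) → (H →L[ℂ] H) → (H →L[ℂ] H)) : Prop :=
  ∀ A p : H →L[ℂ] H, IsEffect A → IsRankOneProjection p →
    LinearMap.rank ((op A p) : H →ₗ[ℂ] H) ≤ 1

/-!
Testing against the pure state `P_ψ` of a unit vector `ψ`, duality gives
`⟪ψ, (A ∘ X) ψ⟫ = Tr((A ∘ P_ψ) X)`. Since `A ∘ P_ψ` is a positive trace-class operator,
`X ↦ Tr((A ∘ P_ψ) X)` is additive (the series converge because `√(A ∘ P_ψ)` is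
Hilbert–Schmidt), so `X ↦ A ∘ X` is additive on effects by polarization. Hence
`A ∘ C = A ∘ B + A ∘ (C - B) ≥ A ∘ B`.
-/

section HilbertSchmidt

open scoped ENNReal

variable {𝕜 E ι : Type*} [RCLike 𝕜] [NormedAddCommGroup E] [InnerProductSpace 𝕜 E]

theorem HilbertBasis.hasSum_norm_inner_sq (b : HilbertBasis ι 𝕜 E) (x : E) :
    HasSum (fun i => ‖⟪b i, x⟫_𝕜‖ ^ 2) (‖x‖ ^ 2) := by
  have h := lp.hasSum_norm (p := 2) (by norm_num) (b.repr x)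
  simp only [b.repr_apply_apply, LinearIsometryEquiv.norm_map] at h
  exact_mod_cast h

theorem HilbertBasis.tsum_enorm_inner_sq (b : HilbertBasis ι 𝕜 E) (x : E) :
    ∑' i, ‖⟪b i, x⟫_𝕜‖ₑ ^ 2 = ‖x‖ₑ ^ 2 := by
  have h := b.hasSum_norm_inner_sq x
  simp only [← ofReal_norm, ← ENNReal.ofReal_pow (norm_nonneg _)]
  rw [← ENNReal.ofReal_tsum_of_nonneg (fun i => by positivity) h.summable, h.tsum_eq]

theorem summable_norm_sq_iff_tsum_enorm_sq_ne_top {F : Type*} [SeminormedAddCommGroup F]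
    (f : ι → F) : Summable (fun i => ‖f i‖ ^ 2) ↔ ∑' i, ‖f i‖ₑ ^ 2 ≠ ∞ := by
  simp_rw [enorm_eq_nnnorm, ← ENNReal.coe_pow, ENNReal.tsum_coe_ne_top_iff_summable_coe,
    NNReal.coe_pow, coe_nnnorm]

theorem summable_inner_of_summable_norm_sq {u v : ι → E} (hu : Summable fun i => ‖u i‖ ^ 2)
    (hv : Summable fun i => ‖v i‖ ^ 2) : Summable fun i => ⟪u i, v i⟫_𝕜 := by
  refine Summable.of_norm_bounded (hu.add hv) fun i => ?_
  nlinarith [norm_inner_le_norm (𝕜 := 𝕜) (u i) (v i), norm_nonneg (u i), norm_nonneg (v i),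
    sq_nonneg (‖u i‖ - ‖v i‖)]

variable [CompleteSpace E]

open ContinuousLinearMap in
theorem HilbertBasis.tsum_enorm_adjoint_apply_sq (b : HilbertBasis ι 𝕜 E) (T : E →L[𝕜] E) :
    ∑' i, ‖adjoint T (b i)‖ₑ ^ 2 = ∑' i, ‖T (b i)‖ₑ ^ 2 := by
  calc ∑' i, ‖adjoint T (b i)‖ₑ ^ 2
      = ∑' i, ∑' j, ‖⟪b j, adjoint T (b i)⟫_𝕜‖ₑ ^ 2 := by simp only [b.tsum_enorm_inner_sq]
    _ = ∑' j, ∑' i, ‖⟪b i, T (b j)⟫_𝕜‖ₑ ^ 2 := by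
        rw [ENNReal.tsum_comm]
        refine tsum_congr fun j => tsum_congr fun i => ?_
        rw [adjoint_inner_right, ← inner_conj_symm, RCLike.enorm_conj]
    _ = ∑' j, ‖T (b j)‖ₑ ^ 2 := by simp only [b.tsum_enorm_inner_sq]

open ContinuousLinearMap in
theorem HilbertBasis.tsum_enorm_mul_apply_sq_le (b : HilbertBasis ι 𝕜 E) (T X : E →L[𝕜] E) :
    ∑' i, ‖(T * X) (b i)‖ₑ ^ 2 ≤ ‖X‖ₑ ^ 2 * ∑' i, ‖T (b i)‖ₑ ^ 2 := by
  -- after taking adjoints, `X†` acts on the left, where it is bounded by its operator norm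
  rw [← b.tsum_enorm_adjoint_apply_sq, ← b.tsum_enorm_adjoint_apply_sq T, ← ENNReal.tsum_mul_left]
  refine ENNReal.tsum_le_tsum fun i => ?_
  rw [← mul_pow, ← LinearIsometryEquiv.enorm_map adjoint X, mul_def, adjoint_comp]
  gcongr
  exact (adjoint X).le_opENorm _

theorem HilbertBasis.summable_norm_mul_apply_sq (b : HilbertBasis ι 𝕜 E) {T : E →L[𝕜] E}
    (hT : Summable fun i => ‖T (b i)‖ ^ 2) (X : E →L[𝕜] E) :
    Summable fun i => ‖(T * X) (b i)‖ ^ 2 := by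
  rw [summable_norm_sq_iff_tsum_enorm_sq_ne_top] at hT ⊢
  exact ne_top_of_le_ne_top (ENNReal.mul_ne_top (by simp) hT) (b.tsum_enorm_mul_apply_sq_le T X)

open ContinuousLinearMap InnerProductSpace in
theorem HilbertBasis.hasSum_inner_rankOne_mul_apply (b : HilbertBasis ι 𝕜 E) (x y : E)
    (T : E →L[𝕜] E) : HasSum (fun i => ⟪b i, (rankOne 𝕜 x y * T) (b i)⟫_𝕜) ⟪y, T x⟫_𝕜 := by
  have h := b.hasSum_inner_mul_inner (adjoint T y) x
  rw [adjoint_inner_left] at h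
  refine h.congr_fun fun i => ?_
  rw [mul_apply_eq_comp, rankOne_apply, inner_smul_right, adjoint_inner_left]

end HilbertSchmidt

section Complex

variable {E ι : Type*} [NormedAddCommGroup E] [InnerProductSpace ℂ E]

theorem ContinuousLinearMap.ext_inner_self_of_norm_eq_one {S T : E →L[ℂ] E}
    (h : ∀ u, ‖u‖ = 1 → ⟪u, S u⟫_ℂ = ⟪u, T u⟫_ℂ) : S = T := by
  refine coe_inj.mp ((ext_inner_map _ _).mp fun x => ?_)
  rcases eq_or_ne x 0 with rfl | hx
  · simp
  set u := ((‖x‖ : ℂ)⁻¹) • x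
  have hxu : x = (‖x‖ : ℂ) • u := by simp [u, smul_smul, hx]
  have hu := h u (norm_smul_inv_norm hx)
  rw [hxu]
  simp only [coe_coe, map_smul, inner_smul_left, inner_smul_right]
  rw [← inner_conj_symm (S u), ← inner_conj_symm (T u), hu]

variable [CompleteSpace E]

theorem HilbertBasis.summable_inner_mul_apply_of_nonneg (b : HilbertBasis ι ℂ E)
    {S : E →L[ℂ] E} (hS : 0 ≤ S) (htr : Summable fun i => ⟪b i, S (b i)⟫_ℂ) (X : E →L[ℂ] E) :
    Summable fun i => ⟪b i, (S * X) (b i)⟫_ℂ := by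
  -- with `R = √S`, the terms are `⟪R bᵢ, (R X) bᵢ⟫`, and `R`, `R X` are Hilbert–Schmidt
  set R := CFC.sqrt S
  have hRR : R * R = S := CFC.sqrt_mul_sqrt_self S hS
  have hR : R.IsSymmetric :=
    ContinuousLinearMap.isSelfAdjoint_iff_isSymmetric.mp (CFC.sqrt_nonneg S).isSelfAdjoint
  have hsq : ∀ i (Y : E →L[ℂ] E), ⟪b i, (R * Y) (b i)⟫_ℂ = ⟪R (b i), Y (b i)⟫_ℂ :=
    fun i Y => (hR _ _).symm
  have hRb : Summable fun i => ‖R (b i)‖ ^ 2 := by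
    rw [← Complex.summable_ofReal]
    refine htr.congr fun i => ?_
    rw [← hRR, hsq, inner_self_eq_norm_sq_to_K]
    norm_cast
  refine (summable_inner_of_summable_norm_sq (𝕜 := ℂ) hRb
    (b.summable_norm_mul_apply_sq hRb X)).congr fun i => ?_
  rw [← hRR, mul_assoc, hsq]

end Complex

theorem isTraceClass_iff_of_nonneg {S : H →L[ℂ] H} (hS : 0 ≤ S) :
    IsTraceClass S ↔ Summable fun i => ⟪(stdBasis H i : H), S (stdBasis H i)⟫_ℂ := by
  rw [IsTraceClass, sqrtOp, hS.isSelfAdjoint.star_eq, CFC.sqrt_mul_self S hS]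

theorem traceOp_mul_add {S : H →L[ℂ] H} (hS : 0 ≤ S) (hS' : IsTraceClass S)
    (X Y : H →L[ℂ] H) : traceOp (S * (X + Y)) = traceOp (S * X) + traceOp (S * Y) := by
  rw [isTraceClass_iff_of_nonneg hS] at hS'
  have hsum := (stdBasis H).summable_inner_mul_apply_of_nonneg hS hS'
  simp only [traceOp, mul_add, add_apply, inner_add_right]
  exact (hsum X).tsum_add (hsum Y)

theorem traceOp_projVec_mul (ψ : H) (Y : H →L[ℂ] H) : traceOp (projVec ψ * Y) = ⟪ψ, Y ψ⟫_ℂ :=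
  ((stdBasis H).hasSum_inner_rankOne_mul_apply ψ ψ Y).tsum_eq

theorem isEffect_projVec {ψ : H} (hψ : ‖ψ‖ = 1) : IsEffect (projVec ψ) :=
  have hP := InnerProductSpace.isStarProjection_rankOne_self (𝕜 := ℂ) hψ
  ⟨hP.nonneg, hP.le_one⟩

theorem isDensity_projVec {ψ : H} (hψ : ‖ψ‖ = 1) : IsDensity (projVec ψ) := by
  have hP := (isEffect_projVec hψ).1
  have h := (stdBasis H).hasSum_inner_rankOne_mul_apply ψ ψ 1
  rw [mul_one, one_apply_eq_self, inner_self_eq_norm_sq_to_K, hψ] at h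
  exact ⟨hP, (isTraceClass_iff_of_nonneg hP).mpr h.summable, h.tsum_eq.trans (by norm_num)⟩

theorem op_add_of_dualityCond {op : (H →L[ℂ] H) → (H →L[ℂ] H) → (H →L[ℂ] H)}
    (hmap : EffectClosed op) (hdual : DualityCond op) {A X Y : H →L[ℂ] H} (hA : IsEffect A)
    (hX : IsEffect X) (hY : IsEffect Y) (hXY : IsEffect (X + Y)) :
    op A (X + Y) = op A X + op A Y := by
  refine ContinuousLinearMap.ext_inner_self_of_norm_eq_one fun ψ hψ => ?_
  have hρ := isDensity_projVec hψ
  have hS := (hmap A _ hA (isEffect_projVec hψ)).1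
  have hpair : ∀ Z, IsEffect Z → ⟪ψ, op A Z ψ⟫_ℂ = traceOp (op A (projVec ψ) * Z) :=
    fun Z hZ => (traceOp_projVec_mul ψ _).symm.trans (hdual A Z _ hA hZ hρ).2.symm
  rw [add_apply, inner_add_right, hpair _ hXY, hpair _ hX, hpair _ hY,
    traceOp_mul_add hS (hdual A X _ hA hX hρ).1]

/-- If `∘ : E(H) × E(H) → E(H)` satisfies the duality condition, then for every effect `A`
the map `B ↦ A ∘ B` is monotone: `B ≤ C` implies `A ∘ B ≤ A ∘ C` for effects `B, C`. -/
theorem duality_implies_monotone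
    (op : (H →L[ℂ] H) → (H →L[ℂ] H) → (H →L[ℂ] H)) (hmap : EffectClosed op)
    (hdual : DualityCond op) :
    ∀ A B C : H →L[ℂ] H, IsEffect A → IsEffect B → IsEffect C → B ≤ C →
      op A B ≤ op A C := by
  intro A B C hA hB hC hBC
  have hD : IsEffect (C - B) := ⟨sub_nonneg.mpr hBC, (sub_le_self C hB.1).trans hC.2⟩
  have hsplit := op_add_of_dualityCond hmap hdual hA hB hD (by rwa [add_sub_cancel])
  rw [add_sub_cancel] at hsplit
  rw [hsplit]
  exact le_add_of_nonneg_right (hmap A _ hA hD).1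

end
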